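/- (Bad example.) Let s = 18 and take degrees d_1 = ⋯ = d_17 = 1 and d_18 = 4 (total degree n = 21), and let deg G = 13, so W = n − deg G = 8. Then the designed minimum distance is M(8) = min { #S : S ⊆ {1,…,18}, Σ_{i∈S} d_i ≥ 8 } = 5, yet with t = 2 = ⌊(5−1)/2⌋ there exists a vector x ∈ F^18 of Hamming weight w(x) = 1 whose expansion satisfies w(φ(x)) = 4 > t; consequently the number of errors guaranteed correctable by the proposed method, ⌈(t+1 − Σ_{i=a+1}^{μ}(i−a)ν_i)/a⌉ − 1 with a determined by Σ_{i=a+1}^{μ} i·ν_i < t+1 ≤ Σ_{i=a}^{μ} i·ν_i, equals 0. -/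

import Mathlib

/-!
A position of degree `1` contributes at most one unit to `Σ_{i∈S} d_i`, so the single position
of degree `4` can only save three positions and weight `8` needs five of them. Since the
Frobenius has no nonzero kernel, the expansion of a vector has weight `Σ_{x_i ≠ 0} d_i`, and the
unit vector at the degree-`4` position expands to weight `4`. Finally the two inequalities
defining `a` force `a = μ = 4` (the top term `4 ν_4 = 4` already exceeds `t = 2`), so the
correction bound is `⌈3/4⌉ - 1 = 0`.
-/

open Finset

theorem Function.iterate_eq_zero_iff {F : Type*} [Zero F] {σ : F → F}
    (hσ : ∀ y, σ y = 0 ↔ y = 0) (n : ℕ) (y : F) : σ^[n] y = 0 ↔ y = 0 := by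
  induction n with
  | zero => rfl
  | succ n ih => rw [Function.iterate_succ_apply', hσ, ih]

theorem hammingNorm_expansion {ι F : Type*} [Fintype ι] [Zero F] [DecidableEq F]
    {σ : F → F} (hσ : ∀ y, σ y = 0 ↔ y = 0) {d : ι → ℕ}
    {φ : (ι → F) → ((Σ i, Fin (d i)) → F)}
    (hφ : ∀ x i (j : Fin (d i)), φ x ⟨i, j⟩ = σ^[(j : ℕ)] (x i)) (x : ι → F) :
    hammingNorm (φ x) = ∑ i ∈ univ.filter (fun i => x i ≠ 0), d i := by
  have hsupp : univ.filter (fun k => φ x k ≠ 0)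
      = (univ.filter fun i => x i ≠ 0).sigma fun _ => univ := by
    ext ⟨i, j⟩
    simp [hφ, Function.iterate_eq_zero_iff hσ]
  rw [hammingNorm, hsupp, card_sigma]
  simp

theorem sum_le_card_add_of_le_one_of_ne {ι : Type*} [DecidableEq ι] {d : ι → ℕ} {i₀ : ι}
    (hd : ∀ i, i ≠ i₀ → d i ≤ 1) (S : Finset ι) : ∑ i ∈ S, d i ≤ #S + (d i₀ - 1) := by
  have hle_card (T : Finset ι) (hT : i₀ ∉ T) : ∑ i ∈ T, d i ≤ #T := by
    simpa using sum_le_card_nsmul T d 1 fun i hi => hd i (ne_of_mem_of_not_mem hi hT)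
  by_cases h : i₀ ∈ S
  · have := hle_card _ (S.notMem_erase i₀)
    rw [← add_sum_erase S d h, ← card_erase_add_one h]
    omega
  · have := hle_card S h
    omega

theorem sInf_card_of_eight_le_sum_eq_five :
    sInf {k : ℕ | ∃ S : Finset (Fin 18), #S = k ∧
      8 ≤ ∑ i ∈ S, if (i : ℕ) < 17 then 1 else 4} = 5 := by
  have hsum_le : ∀ S : Finset (Fin 18), ∑ i ∈ S, (if (i : ℕ) < 17 then 1 else 4) ≤ #S + 3 :=
    sum_le_card_add_of_le_one_of_ne (i₀ := 17) fun i hi => by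
      have : (i : ℕ) < 17 := by fin_omega
      simp [this]
  have hfive : 5 ∈ {k : ℕ | ∃ S : Finset (Fin 18), #S = k ∧
      8 ≤ ∑ i ∈ S, if (i : ℕ) < 17 then 1 else 4} := ⟨{13, 14, 15, 16, 17}, rfl, by decide⟩
  refine le_antisymm (Nat.sInf_le hfive) (le_csInf ⟨5, hfive⟩ ?_)
  rintro k ⟨S, rfl, hS⟩
  have := hS.trans (hsum_le S)
  omega

theorem eq_of_sum_Icc_lt_of_le_sum_Icc {f : ℕ → ℕ} {a μ t : ℕ} (hμ : t < f μ)
    (halt : ∑ i ∈ Icc (a + 1) μ, f i < t + 1) (hage : t + 1 ≤ ∑ i ∈ Icc a μ, f i) : a = μ := by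
  rcases lt_trichotomy a μ with h | h | h
  · have := single_le_sum (s := Icc (a + 1) μ) (f := f) (fun i _ => Nat.zero_le _)
      (mem_Icc.2 ⟨h, le_rfl⟩)
    omega
  · exact h
  · rw [Icc_eq_empty_of_lt h] at hage
    simp at hage

theorem bad_example_general
    (F : Type*) [Field F] [DecidableEq F]
    (σ : F → F) (hσ : ∀ x, σ x = x ^ 17)
    (d : Fin 18 → ℕ) (hd : ∀ i : Fin 18, d i = if (i : ℕ) < 17 then 1 else 4)
    (φ : (Fin 18 → F) → ((Σ i : Fin 18, Fin (d i)) → F))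
    (hφ : ∀ x (i : Fin 18) (j : Fin (d i)), φ x ⟨i, j⟩ = σ^[(j : ℕ)] (x i))
    (ν : ℕ → ℕ) (hν : ∀ k, ν k = (Finset.univ.filter (fun j : Fin 18 => d j = k)).card)
    (μ : ℕ) (hμ : μ = Finset.univ.sup d)
    (t : ℕ) (ht : t = 2)
    (a : ℕ)
    (halt : ∑ i ∈ Finset.Icc (a + 1) μ, i * ν i < t + 1)
    (hage : t + 1 ≤ ∑ i ∈ Finset.Icc a μ, i * ν i) :
    sInf {k : ℕ | ∃ S : Finset (Fin 18), S.card = k ∧ 8 ≤ ∑ i ∈ S, d i} = 5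
    ∧ (∃ x : Fin 18 → F,
        (Finset.univ.filter (fun i : Fin 18 => x i ≠ 0)).card = 1
        ∧ (Finset.univ.filter (fun k : Σ i : Fin 18, Fin (d i) => φ x k ≠ 0)).card = 4
        ∧ t < 4)
    ∧ ⌈(((t : ℚ) + 1) - ((∑ i ∈ Finset.Icc (a + 1) μ, (i - a) * ν i : ℕ) : ℚ))
          / (a : ℚ)⌉ - 1 = 0 := by
  obtain rfl : d = fun i : Fin 18 => if (i : ℕ) < 17 then 1 else 4 := funext hd
  have hσ0 : ∀ y, σ y = 0 ↔ y = 0 := fun y => by rw [hσ, pow_eq_zero_iff (by norm_num)]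
  have hμ4 : μ = 4 := by rw [hμ]; decide
  have ha : a = 4 := by
    subst hμ4
    exact eq_of_sum_Icc_lt_of_le_sum_Icc (by rw [hν, ht]; decide) halt hage
  have hsupp : (univ.filter fun i => (Pi.single 17 1 : Fin 18 → F) i ≠ 0) = {17} := by
    ext i
    by_cases hi : i = 17 <;> simp [hi]
  refine ⟨?_, ⟨(Pi.single 17 1 : Fin 18 → F), by rw [hsupp]; rfl, ?_, by omega⟩, ?_⟩
  · exact sInf_card_of_eight_le_sum_eq_five
  · exact (hammingNorm_expansion hσ0 hφ _).trans (by rw [hsupp]; rfl)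
  · subst ha hμ4 ht
    norm_num [Int.ceil_eq_iff]

/-- bad example: Let `s = 18` with degrees
`d_1 = ⋯ = d_17 = 1` and `d_18 = 4` (total degree `n = 21`), over
`F = F_{17^4}` with `σ(x) = x^17`, and `deg G = 13`, so `W = n − deg G = 8`.
Then the designed minimum distance is `M(8) = 5`, yet with
`t = 2 = ⌊(5−1)/2⌋` there exists a vector `x ∈ F^18` of Hamming weight
`w(x) = 1` whose expansion satisfies `w(φ(x)) = 4 > t`; consequently the number
of errors guaranteed correctable by the proposed method,
`⌈(t+1 − Σ_{i=a+1}^{μ}(i−a)ν_i)/a⌉ − 1` with `a` determined by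
`Σ_{i=a+1}^{μ} i·ν_i < t+1 ≤ Σ_{i=a}^{μ} i·ν_i`, equals `0`. -/
theorem bad_example
    (F : Type*) [Field F] [Fintype F] [DecidableEq F]
    (hF : Fintype.card F = 17 ^ 4)
    (σ : F → F) (hσ : ∀ x, σ x = x ^ 17)
    (d : Fin 18 → ℕ) (hd : ∀ i : Fin 18, d i = if (i : ℕ) < 17 then 1 else 4)
    (φ : (Fin 18 → F) → ((Σ i : Fin 18, Fin (d i)) → F))
    (hφ : ∀ x (i : Fin 18) (j : Fin (d i)), φ x ⟨i, j⟩ = σ^[(j : ℕ)] (x i))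
    (ν : ℕ → ℕ) (hν : ∀ k, ν k = (Finset.univ.filter (fun j : Fin 18 => d j = k)).card)
    (μ : ℕ) (hμ : μ = Finset.univ.sup d)
    (t : ℕ) (ht : t = 2)
    (a : ℕ) (ha : 0 < a)
    (halt : ∑ i ∈ Finset.Icc (a + 1) μ, i * ν i < t + 1)
    (hage : t + 1 ≤ ∑ i ∈ Finset.Icc a μ, i * ν i) :
    sInf {k : ℕ | ∃ S : Finset (Fin 18), S.card = k ∧ 8 ≤ ∑ i ∈ S, d i} = 5
    ∧ (∃ x : Fin 18 → F,
        (Finset.univ.filter (fun i : Fin 18 => x i ≠ 0)).card = 1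
        ∧ (Finset.univ.filter (fun k : Σ i : Fin 18, Fin (d i) => φ x k ≠ 0)).card = 4
        ∧ t < 4)
    ∧ ⌈(((t : ℚ) + 1) - ((∑ i ∈ Finset.Icc (a + 1) μ, (i - a) * ν i : ℕ) : ℚ))
          / (a : ℚ)⌉ - 1 = 0 :=
  bad_example_general F σ hσ d hd φ hφ ν hν μ hμ t ht a halt hage
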